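/- arXiv:0807.0696 — 2 statements merged into one kernel-verified Lean document; each statement's English description precedes it below -/
import Mathlib

section
/- Let μ ≥ 1 be a natural number, let r be a natural number, and let d, m : Fin r → ℕ satisfy d i ≥ 1 and m i ≥ 1 for all i. If ∑ i, d i * (m i)^2 = 3 * μ^2 and ∑ i, (d i : ℤ) * (m i) * (μ - m i) = 0, then r ≥ 1 and there exists an index i with m i ≥ μ. -/
/-!
The second equation says that `μ` is the mean of the `m i` weighted by `d i * m i ≥ 0`, and these
weights do not all vanish because `∑ d i * m i ^ 2 = 3 * μ ^ 2 > 0`; a mean is at most the largest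
value, so some `m i ≥ μ`.
-/

open Finset

theorem Finset.exists_le_of_sum_mul_sub_eq_zero {ι R : Type*} [CommRing R] [LinearOrder R]
    [IsStrictOrderedRing R] {s : Finset ι} {w x : ι → R} {a : R}
    (hw : ∀ i ∈ s, 0 ≤ w i) (hne : ∃ i ∈ s, w i ≠ 0)
    (h : ∑ i ∈ s, w i * (a - x i) = 0) : ∃ i ∈ s, a ≤ x i := by
  by_contra! hlt
  have hterm := (sum_eq_zero_iff_of_nonneg fun i hi =>
    mul_nonneg (hw i hi) (sub_nonneg.2 (hlt i hi).le)).1 h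
  obtain ⟨i, hi, hwi⟩ := hne
  rcases mul_eq_zero.1 (hterm i hi) with hw0 | hax
  · exact hwi hw0
  · exact (hlt i hi).ne (sub_eq_zero.1 hax).symm

theorem nfi_numerical_general (μ r : ℕ) (hμ : 1 ≤ μ) (d m : Fin r → ℕ)
    (h1 : ∑ i, d i * (m i) ^ 2 = 3 * μ ^ 2)
    (h2 : ∑ i, (d i : ℤ) * (m i : ℤ) * ((μ : ℤ) - (m i : ℤ)) = 0) :
    1 ≤ r ∧ ∃ i, μ ≤ m i := by
  have hweight : ∃ i ∈ univ, (d i : ℤ) * (m i : ℤ) ≠ 0 := by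
    by_contra! hzero
    have hsum : ∑ i, d i * (m i) ^ 2 = 0 := sum_eq_zero fun i _ => by
      have : d i * m i = 0 := by exact_mod_cast hzero i (mem_univ i)
      rw [sq, ← mul_assoc, this, zero_mul]
    have : 0 < 3 * μ ^ 2 := by positivity
    omega
  obtain ⟨i, -, hi⟩ := exists_le_of_sum_mul_sub_eq_zero
    (fun i _ => by positivity) hweight h2
  exact ⟨i.pos, i, by exact_mod_cast hi⟩

theorem nfi_numerical (μ r : ℕ) (hμ : 1 ≤ μ) (d m : Fin r → ℕ)
    (hd : ∀ i, 1 ≤ d i) (hm : ∀ i, 1 ≤ m i)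
    (h1 : ∑ i, d i * (m i) ^ 2 = 3 * μ ^ 2)
    (h2 : ∑ i, (d i : ℤ) * (m i : ℤ) * ((μ : ℤ) - (m i : ℤ)) = 0) :
    1 ≤ r ∧ ∃ i, μ ≤ m i :=
  nfi_numerical_general μ r hμ d m h1 h2
end

section
/- In the polynomial ring ℚ[x, y, z, t], let F = x³ + y³ + z³ + 3t³ and let q₁ = -xy + y² - xz + z² - 3xt - 3t², q₂ = x² - xy - yz + z² - 3yt - 3t², q₃ = x² + y² - xz - yz - 3zt - 3t², q₄ = -x² - y² - z² - xt - yt - zt. Then the polynomial F(q₁, q₂, q₃, q₄), obtained by substituting q₁, q₂, q₃, q₄ for x, y, z, t in F, lies in the ideal generated by F; that is, F divides q₁³ + q₂³ + q₃³ + 3q₄³. -/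
/-!
Write `F(v) = ∑ cᵢ vᵢ³` and `⟨u, v²⟩ = ∑ cᵢ uᵢ vᵢ²` (one third of the derivative of `F` at `v` in
direction `u`). Expanding, `F(a u + b v) = a³ F(u) + 3ab (a ⟨v, u²⟩ + b ⟨u, v²⟩) + b³ F(v)`.
If `F(v) = 0`, the choice `(a, b) = (-⟨u, v²⟩, ⟨v, u²⟩)` kills the middle term, so `a u + b v` is
the third point of `X = {F = 0}` on the line through `v` and `u`, i.e. the Geiser image `i_v(u)`,
and `F(i_v(u)) = -⟨u, v²⟩³ F(u)`. For `v = (1, 1, 1, -1)` and `u = (x, y, z, t)` the generic point,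
`i_v(u) = (q₁, q₂, q₃, q₄)` and `⟨u, v²⟩ = x + y + z + 3t`.
-/

open MvPolynomial

section DiagonalCubic

variable {ι R : Type*} [Fintype ι] [CommRing R]

def diagonalCubic (c v : ι → R) : R := ∑ i, c i * v i ^ 3

def diagonalCubicPolar (c u v : ι → R) : R := ∑ i, c i * u i * v i ^ 2

theorem diagonalCubic_smul_add_smul (c u v : ι → R) (a b : R) :
    diagonalCubic c (a • u + b • v) =
      a ^ 3 * diagonalCubic c u
        + 3 * a * b * (a * diagonalCubicPolar c v u + b * diagonalCubicPolar c u v)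
        + b ^ 3 * diagonalCubic c v := by
  simp only [diagonalCubic, diagonalCubicPolar, Pi.add_apply, Pi.smul_apply, smul_eq_mul,
    Finset.mul_sum, ← Finset.sum_add_distrib]
  exact Finset.sum_congr rfl fun i _ => by ring

def geiserMap (c v u : ι → R) : ι → R := diagonalCubicPolar c v u • v - diagonalCubicPolar c u v • u

theorem diagonalCubic_geiserMap {c v : ι → R} (hv : diagonalCubic c v = 0) (u : ι → R) :
    diagonalCubic c (geiserMap c v u) = -diagonalCubicPolar c u v ^ 3 * diagonalCubic c u := by
  have h := diagonalCubic_smul_add_smul c u v (-diagonalCubicPolar c u v) (diagonalCubicPolar c v u)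
  rw [neg_smul, neg_add_eq_sub, hv] at h
  rw [geiserMap, h]
  ring

end DiagonalCubic

theorem geiser_involution_preserves_cubic :
    letI x : MvPolynomial (Fin 4) ℚ := X 0
    letI y : MvPolynomial (Fin 4) ℚ := X 1
    letI z : MvPolynomial (Fin 4) ℚ := X 2
    letI t : MvPolynomial (Fin 4) ℚ := X 3
    letI F : MvPolynomial (Fin 4) ℚ := x ^ 3 + y ^ 3 + z ^ 3 + 3 * t ^ 3
    letI q₁ : MvPolynomial (Fin 4) ℚ :=
      -(x * y) + y ^ 2 - x * z + z ^ 2 - 3 * (x * t) - 3 * t ^ 2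
    letI q₂ : MvPolynomial (Fin 4) ℚ :=
      x ^ 2 - x * y - y * z + z ^ 2 - 3 * (y * t) - 3 * t ^ 2
    letI q₃ : MvPolynomial (Fin 4) ℚ :=
      x ^ 2 + y ^ 2 - x * z - y * z - 3 * (z * t) - 3 * t ^ 2
    letI q₄ : MvPolynomial (Fin 4) ℚ :=
      -(x ^ 2) - y ^ 2 - z ^ 2 - x * t - y * t - z * t
    (MvPolynomial.aeval ![q₁, q₂, q₃, q₄]) F ∈ Ideal.span {F} ∧
      F ∣ q₁ ^ 3 + q₂ ^ 3 + q₃ ^ 3 + 3 * q₄ ^ 3 := by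
  set x : MvPolynomial (Fin 4) ℚ := X 0
  set y : MvPolynomial (Fin 4) ℚ := X 1
  set z : MvPolynomial (Fin 4) ℚ := X 2
  set t : MvPolynomial (Fin 4) ℚ := X 3
  set F := x ^ 3 + y ^ 3 + z ^ 3 + 3 * t ^ 3
  set q₁ := -(x * y) + y ^ 2 - x * z + z ^ 2 - 3 * (x * t) - 3 * t ^ 2
  set q₂ := x ^ 2 - x * y - y * z + z ^ 2 - 3 * (y * t) - 3 * t ^ 2
  set q₃ := x ^ 2 + y ^ 2 - x * z - y * z - 3 * (z * t) - 3 * t ^ 2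
  set q₄ := -(x ^ 2) - y ^ 2 - z ^ 2 - x * t - y * t - z * t
  let c : Fin 4 → MvPolynomial (Fin 4) ℚ := ![1, 1, 1, 3]
  let P : Fin 4 → MvPolynomial (Fin 4) ℚ := ![1, 1, 1, -1]
  have hP : diagonalCubic c P = 0 := by
    simp [diagonalCubic, c, P, Fin.sum_univ_four]
    norm_num
  have hgeiser : geiserMap c P ![x, y, z, t] = ![q₁, q₂, q₃, q₄] := by
    ext i : 1
    fin_cases i <;>
      simp [geiserMap, diagonalCubicPolar, c, P, q₁, q₂, q₃, q₄, Fin.sum_univ_four] <;> ring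
  have hdvd : F ∣ q₁ ^ 3 + q₂ ^ 3 + q₃ ^ 3 + 3 * q₄ ^ 3 := by
    have h := Dvd.intro_left _ (diagonalCubic_geiserMap hP ![x, y, z, t]).symm
    rw [hgeiser] at h
    simpa [diagonalCubic, c, Fin.sum_univ_four] using h
  have heval : aeval ![q₁, q₂, q₃, q₄] F = q₁ ^ 3 + q₂ ^ 3 + q₃ ^ 3 + 3 * q₄ ^ 3 := by
    simp [F, x, y, z, t, map_ofNat]
  exact ⟨heval ▸ Ideal.mem_span_singleton.mpr hdvd, hdvd⟩
end
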